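/- (A priori error estimate for the conforming method, classical regularity.) Let n ≥ 1, 0 < λ ≤ Λ, γ ≥ 0, μ ≥ 0, C > 0, let Ω ⊂ ℝⁿ be a nonempty bounded open set, let f ∈ Lⁿ(Ω), let g : ∂Ω → ℝ be bounded, and let F = F(x,r,p,M) satisfy for almost every x ∈ Ω the structure condition 𝒫⁻_{λ,Λ}(M−N) − γ|p−q| − μ·max(s−r,0) ≤ F(x,r,p,M) − F(x,s,q,N) ≤ 𝒫⁺_{λ,Λ}(M−N) + γ|p−q| + μ·max(r−s,0) for all r, s ∈ ℝ, p, q ∈ ℝⁿ and symmetric M, N. Let X be the space of twice continuously differentiable functions ℝⁿ → ℝ, let Ψ(v) := sup_{x ∈ ∂Ω} |g(x) − v(x)| + C·‖f − F[v]‖_{Lⁿ(Ω)}, and assume the stability bound sup_{Ω} |u − v| ≤ Ψ(v) for all v ∈ X, where u ∈ X satisfies F[u] = f almost everywhere in Ω and u = g on ∂Ω. If V_j ⊂ X and u_j ∈ V_j satisfies Ψ(u_j) = inf_{v_j ∈ V_j} Ψ(v_j), then sup_{Ω} |u − u_j| ≤ inf_{v_j ∈ V_j} [ sup_{x ∈ ∂Ω}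 |u(x) − v_j(x)| + C·( √n·Λ·‖D²(u − v_j)‖_{Lⁿ(Ω)} + γ·‖∇(u − v_j)‖_{Lⁿ(Ω)} + μ·‖u − v_j‖_{Lⁿ(Ω)} ) ]. -/

import Mathlib

open MeasureTheory Matrix
open scoped ENNReal NNReal

/-- The set `S(λ,Λ)` of symmetric `n×n` matrices with `λI ≤ A ≤ ΛI` in the Loewner order. -/
def pucciSet (n : ℕ) (lam Lam : ℝ) : Set (Matrix (Fin n) (Fin n) ℝ) :=
  {A | A.IsSymm ∧ (A - lam • (1 : Matrix (Fin n) (Fin n) ℝ)).PosSemidef ∧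
       (Lam • (1 : Matrix (Fin n) (Fin n) ℝ) - A).PosSemidef}

/-- The Pucci extremal operator `𝒫⁺_{λ,Λ}(M) = sup_{A ∈ S(λ,Λ)} (−tr(A·M))`. -/
noncomputable def pucciPlus (n : ℕ) (lam Lam : ℝ) (M : Matrix (Fin n) (Fin n) ℝ) : ℝ :=
  sSup ((fun A => -(A * M).trace) '' pucciSet n lam Lam)

/-- The Pucci extremal operator `𝒫⁻_{λ,Λ}(M) = inf_{A ∈ S(λ,Λ)} (−tr(A·M))`. -/
noncomputable def pucciMinus (n : ℕ) (lam Lam : ℝ) (M : Matrix (Fin n) (Fin n) ℝ) : ℝ :=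
  sInf ((fun A => -(A * M).trace) '' pucciSet n lam Lam)

/-- The Frobenius norm of a matrix. -/
noncomputable def frobNorm (n : ℕ) (M : Matrix (Fin n) (Fin n) ℝ) : ℝ :=
  Real.sqrt (∑ i, ∑ j, (M i j) ^ 2)

/-- The Hessian matrix `D²v(x)` of `v : ℝⁿ → ℝ`, with entries the second partial
derivatives `∂ᵢ∂ⱼ v (x)`. -/
noncomputable def hessianMatrix (n : ℕ) (v : EuclideanSpace ℝ (Fin n) → ℝ)
    (x : EuclideanSpace ℝ (Fin n)) : Matrix (Fin n) (Fin n) ℝ :=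
  Matrix.of fun i j =>
    fderiv ℝ (fun y => fderiv ℝ v y (EuclideanSpace.single j 1)) x (EuclideanSpace.single i 1)

/-- The nonlinear residual `F[v](x) = F(x, v(x), ∇v(x), D²v(x))` of `v`. -/
noncomputable def opApply (n : ℕ)
    (F : EuclideanSpace ℝ (Fin n) → ℝ → EuclideanSpace ℝ (Fin n) →
      Matrix (Fin n) (Fin n) ℝ → ℝ)
    (v : EuclideanSpace ℝ (Fin n) → ℝ) (x : EuclideanSpace ℝ (Fin n)) : ℝ :=
  F x (v x) (gradient v x) (hessianMatrix n v x)

/-- The minimal residual functional `Ψ(v) = sup_{∂Ω} |g − v| + C‖f − F[v]‖_{Lⁿ(Ω)}`. -/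
noncomputable def Psi (n : ℕ) (Ω : Set (EuclideanSpace ℝ (Fin n))) (C : ℝ)
    (g f : EuclideanSpace ℝ (Fin n) → ℝ)
    (F : EuclideanSpace ℝ (Fin n) → ℝ → EuclideanSpace ℝ (Fin n) →
      Matrix (Fin n) (Fin n) ℝ → ℝ)
    (v : EuclideanSpace ℝ (Fin n) → ℝ) : ℝ :=
  sSup ((fun x => |g x - v x|) '' frontier Ω) +
    C * (eLpNorm (fun x => f x - opApply n F v x) n (volume.restrict Ω)).toReal

-- step 1: lam • 1 ∈ pucciSet
lemma smul_one_mem_pucciSet {n : ℕ} {lam Lam : ℝ} (h : lam ≤ Lam) :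
    lam • (1 : Matrix (Fin n) (Fin n) ℝ) ∈ pucciSet n lam Lam := by
  refine ⟨?_, ?_, ?_⟩
  · simp [Matrix.IsSymm, Matrix.transpose_smul]
  · simpa using Matrix.PosSemidef.zero
  · rw [← sub_smul]
    have : (Lam - lam) • (1 : Matrix (Fin n) (Fin n) ℝ) = Matrix.diagonal (fun _ => Lam - lam) := by
      ext i j
      by_cases hij : i = j <;> simp [Matrix.smul_apply, Matrix.one_apply, Matrix.diagonal, hij]
    rw [this]
    exact Matrix.PosSemidef.diagonal (fun i => by simp [sub_nonneg.mpr h])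

lemma Matrix.PosSemidef.diag_nonneg' {n : ℕ} {B : Matrix (Fin n) (Fin n) ℝ} (hB : B.PosSemidef) (i : Fin n) :
    0 ≤ B i i := by
  have := hB.2 (Finsupp.single i 1)
  simpa [Matrix.mulVec_single, dotProduct, Pi.single_apply] using this

lemma Matrix.PosSemidef.trace_nonneg' {n : ℕ} {B : Matrix (Fin n) (Fin n) ℝ} (hB : B.PosSemidef) :
    0 ≤ B.trace := by
  exact Finset.sum_nonneg fun i _ => hB.diag_nonneg' i

open scoped MatrixOrder in
lemma trace_mul_nonneg' {n : ℕ} {A B : Matrix (Fin n) (Fin n) ℝ}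
    (hA : A.PosSemidef) (hB : B.PosSemidef) : 0 ≤ (B * A).trace := by
  have h1 : B = CFC.sqrt B * CFC.sqrt B := (CFC.sqrt_mul_sqrt_self B hB.nonneg).symm
  have h2 : (CFC.sqrt B * A * CFC.sqrt B).trace = (B * A).trace := by
    rw [Matrix.trace_mul_cycle, ← h1]
  rw [← h2]
  have h3 : ((CFC.sqrt B)ᴴ * A * CFC.sqrt B).PosSemidef := hA.conjTranspose_mul_mul_same (CFC.sqrt B)
  have h4 : (CFC.sqrt B)ᴴ = CFC.sqrt B := (CFC.sqrt_nonneg B).posSemidef.1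
  rw [h4] at h3
  exact h3.trace_nonneg'

lemma pucci_frob_sq_le {n : ℕ} {lam Lam : ℝ} (hlam : 0 ≤ lam) (hle : lam ≤ Lam)
    {A : Matrix (Fin n) (Fin n) ℝ}
    (hA : A ∈ pucciSet n lam Lam) : ∑ i, ∑ j, (A i j) ^ 2 ≤ n * Lam ^ 2 := by
  obtain ⟨hsym, h1, h2⟩ := hA
  have hLam : 0 ≤ Lam := hlam.trans hle
  have hd : (Matrix.diagonal (fun _ : Fin n => lam)) = lam • (1 : Matrix (Fin n) (Fin n) ℝ) := by
    ext i j
    by_cases hij : i = j <;> simp [Matrix.smul_apply, Matrix.one_apply, Matrix.diagonal, hij]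
  have hApsd : A.PosSemidef := by
    have := h1.add (Matrix.PosSemidef.diagonal (d := fun _ : Fin n => lam) (fun i => hlam))
    rw [hd] at this
    simpa using this
  have htr : A.trace ≤ n * Lam := by
    have hdiag : ∀ i, A i i ≤ Lam := by
      intro i
      have := h2.diag_nonneg' i
      simp [Matrix.sub_apply, Matrix.smul_apply, Matrix.one_apply] at this
      linarith
    calc A.trace = ∑ i, A i i := rfl
    _ ≤ ∑ _i : Fin n, Lam := Finset.sum_le_sum fun i _ => hdiag i
    _ = n * Lam := by simp [mul_comm]
  have htrA : 0 ≤ A.trace := hApsd.trace_nonneg'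
  have hkey : 0 ≤ ((Lam • (1 : Matrix (Fin n) (Fin n) ℝ) - A) * A).trace :=
    trace_mul_nonneg' hApsd h2
  have hexp : ((Lam • (1 : Matrix (Fin n) (Fin n) ℝ) - A) * A).trace
      = Lam * A.trace - (A * A).trace := by
    rw [Matrix.sub_mul, Matrix.smul_mul, Matrix.one_mul, Matrix.trace_sub, Matrix.trace_smul]
    simp
  have hAA : (A * A).trace = ∑ i, ∑ j, (A i j) ^ 2 := by
    simp only [Matrix.trace, Matrix.diag, Matrix.mul_apply]
    refine Finset.sum_congr rfl fun i _ => Finset.sum_congr rfl fun j _ => ?_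
    have : A j i = A i j := by
      have := congrFun (congrFun hsym i) j
      simpa [Matrix.transpose_apply] using this
    rw [this, sq]
  calc ∑ i, ∑ j, (A i j) ^ 2 = (A * A).trace := hAA.symm
  _ ≤ Lam * A.trace := by linarith [hkey, hexp.symm.le, hexp ▸ hkey]
  _ ≤ Lam * (n * Lam) := by nlinarith
  _ = n * Lam ^ 2 := by ring

lemma pucci_trace_abs_le {n : ℕ} {lam Lam : ℝ} (hlam : 0 ≤ lam) (hle : lam ≤ Lam)
    {A : Matrix (Fin n) (Fin n) ℝ} (hA : A ∈ pucciSet n lam Lam)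
    (M : Matrix (Fin n) (Fin n) ℝ) :
    |(A * M).trace| ≤ Real.sqrt n * Lam * frobNorm n M := by
  have hLam : 0 ≤ Lam := hlam.trans hle
  have htr : (A * M).trace = ∑ p : Fin n × Fin n, A p.1 p.2 * M p.2 p.1 := by
    simp only [Matrix.trace, Matrix.diag, Matrix.mul_apply]
    rw [← Finset.univ_product_univ, Finset.sum_product]
  have hcs := Finset.sum_mul_sq_le_sq_mul_sq Finset.univ
    (fun p : Fin n × Fin n => A p.1 p.2) (fun p : Fin n × Fin n => M p.2 p.1)
  have hA2 : ∑ p : Fin n × Fin n, (A p.1 p.2) ^ 2 ≤ n * Lam ^ 2 := by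
    rw [← Finset.univ_product_univ, Finset.sum_product]
    exact pucci_frob_sq_le hlam hle hA
  have hM2 : ∑ p : Fin n × Fin n, (M p.2 p.1) ^ 2 = ∑ i, ∑ j, (M i j) ^ 2 := by
    rw [← Finset.univ_product_univ, Finset.sum_product]
    exact Finset.sum_comm ..
  have habs : |(A * M).trace| ^ 2 ≤ (n * Lam ^ 2) * (∑ i, ∑ j, (M i j) ^ 2) := by
    rw [htr, sq_abs]
    calc (∑ p : Fin n × Fin n, A p.1 p.2 * M p.2 p.1) ^ 2
        ≤ (∑ p : Fin n × Fin n, (A p.1 p.2) ^ 2) * ∑ p : Fin n × Fin n, (M p.2 p.1) ^ 2 := hcs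
      _ ≤ (n * Lam ^ 2) * (∑ i, ∑ j, (M i j) ^ 2) := by
          rw [hM2]
          apply mul_le_mul_of_nonneg_right hA2
          positivity
  have hrhs : Real.sqrt n * Lam * frobNorm n M = Real.sqrt ((n * Lam ^ 2) * (∑ i, ∑ j, (M i j) ^ 2)) := by
    rw [frobNorm, Real.sqrt_mul (by positivity), Real.sqrt_mul (Nat.cast_nonneg n), Real.sqrt_sq hLam]
  rw [hrhs]
  have := Real.sqrt_le_sqrt habs
  rwa [Real.sqrt_sq_eq_abs, abs_abs] at this

lemma pucciPlus_le {n : ℕ} {lam Lam : ℝ} (hlam : 0 ≤ lam) (hle : lam ≤ Lam)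
    (M : Matrix (Fin n) (Fin n) ℝ) :
    pucciPlus n lam Lam M ≤ Real.sqrt n * Lam * frobNorm n M := by
  apply csSup_le (Set.Nonempty.image _ ⟨_, smul_one_mem_pucciSet hle⟩)
  rintro y ⟨A, hA, rfl⟩
  exact (neg_le_abs _).trans (pucci_trace_abs_le hlam hle hA M)

lemma le_pucciMinus {n : ℕ} {lam Lam : ℝ} (hlam : 0 ≤ lam) (hle : lam ≤ Lam)
    (M : Matrix (Fin n) (Fin n) ℝ) :
    -(Real.sqrt n * Lam * frobNorm n M) ≤ pucciMinus n lam Lam M := by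
  apply le_csInf (Set.Nonempty.image _ ⟨_, smul_one_mem_pucciSet hle⟩)
  rintro y ⟨A, hA, rfl⟩
  have := pucci_trace_abs_le hlam hle hA M
  have h2 : (A * M).trace ≤ |(A * M).trace| := le_abs_self _
  show -(√↑n * Lam * frobNorm n M) ≤ -(A * M).trace
  linarith

section calcfacts
variable {n : ℕ} {v u : EuclideanSpace ℝ (Fin n) → ℝ}

lemma fderiv_contDiff_one (hv : ContDiff ℝ 2 v) : ContDiff ℝ 1 (fderiv ℝ v) :=
  hv.fderiv_right (le_refl _)

lemma hessianMatrix_apply (hv : ContDiff ℝ 2 v) (x : EuclideanSpace ℝ (Fin n)) (i j : Fin n) :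
    hessianMatrix n v x i j =
      fderiv ℝ (fderiv ℝ v) x (EuclideanSpace.single i 1) (EuclideanSpace.single j 1) := by
  have hdf : DifferentiableAt ℝ (fderiv ℝ v) x :=
    ((fderiv_contDiff_one hv).differentiable one_ne_zero) x
  have h := fderiv_clm_apply hdf (differentiableAt_const (EuclideanSpace.single j 1))
  show fderiv ℝ (fun y => fderiv ℝ v y (EuclideanSpace.single j 1)) x (EuclideanSpace.single i 1) = _
  rw [h]
  simp

lemma hessianMatrix_isSymm (hv : ContDiff ℝ 2 v) (x : EuclideanSpace ℝ (Fin n)) :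
    (hessianMatrix n v x).IsSymm := by
  have hs : ∀ a b, fderiv ℝ (fderiv ℝ v) x a b = fderiv ℝ (fderiv ℝ v) x b a :=
    hv.contDiffAt.isSymmSndFDerivAt (by norm_num)
  ext i j
  rw [Matrix.transpose_apply, hessianMatrix_apply hv, hessianMatrix_apply hv, hs]

lemma hessianMatrix_sub (hu : ContDiff ℝ 2 u) (hv : ContDiff ℝ 2 v)
    (x : EuclideanSpace ℝ (Fin n)) :
    hessianMatrix n (u - v) x = hessianMatrix n u x - hessianMatrix n v x := by
  have e1 : fderiv ℝ (u - v) = fun y => fderiv ℝ u y - fderiv ℝ v y := by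
    funext y
    exact fderiv_fun_sub ((hu.differentiable two_ne_zero) y) ((hv.differentiable two_ne_zero) y)
  have hdu : DifferentiableAt ℝ (fderiv ℝ u) x := ((fderiv_contDiff_one hu).differentiable one_ne_zero) x
  have hdv : DifferentiableAt ℝ (fderiv ℝ v) x := ((fderiv_contDiff_one hv).differentiable one_ne_zero) x
  have e2 : fderiv ℝ (fderiv ℝ (u - v)) x = fderiv ℝ (fderiv ℝ u) x - fderiv ℝ (fderiv ℝ v) x := by
    rw [e1]
    exact fderiv_fun_sub hdu hdv
  have huv : ContDiff ℝ 2 (u - v) := hu.sub hv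
  ext i j
  rw [Matrix.sub_apply, hessianMatrix_apply huv, hessianMatrix_apply hu,
    hessianMatrix_apply hv, e2]
  simp

lemma gradient_sub' (hu : ContDiff ℝ 2 u) (hv : ContDiff ℝ 2 v)
    (x : EuclideanSpace ℝ (Fin n)) :
    gradient (u - v) x = gradient u x - gradient v x := by
  have e1 : fderiv ℝ (u - v) x = fderiv ℝ u x - fderiv ℝ v x :=
    fderiv_sub ((hu.differentiable two_ne_zero) x) ((hv.differentiable two_ne_zero) x)
  simp only [gradient, e1, map_sub]

lemma continuous_hessian_frob (hv : ContDiff ℝ 2 v) :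
    Continuous fun x => frobNorm n (hessianMatrix n v x) := by
  have hf'' : Continuous (fderiv ℝ (fderiv ℝ v)) :=
    (fderiv_contDiff_one hv).continuous_fderiv one_ne_zero
  have hentry : ∀ i j, Continuous fun x => hessianMatrix n v x i j := by
    intro i j
    have : Continuous fun x => fderiv ℝ (fderiv ℝ v) x (EuclideanSpace.single i 1)
        (EuclideanSpace.single j 1) :=
      ((hf''.clm_apply continuous_const).clm_apply continuous_const)
    simpa only [hessianMatrix_apply hv] using this.congr fun x => (hessianMatrix_apply hv x i j).symm
  unfold frobNorm
  exact Real.continuous_sqrt.comp (continuous_finset_sum _ fun i _ =>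
    continuous_finset_sum _ fun j _ => (hentry i j).pow 2)

lemma continuous_gradient_norm (hv : ContDiff ℝ 2 v) :
    Continuous fun x => ‖gradient v x‖ := by
  have h1 : Continuous (fderiv ℝ v) := (hv.of_le one_le_two).continuous_fderiv one_ne_zero
  have : Continuous (gradient v) := by
    unfold gradient
    exact (LinearIsometryEquiv.continuous _).comp h1
  exact this.norm
end calcfacts

lemma eLpNorm_lt_top_of_cont {n : ℕ} {Ω : Set (EuclideanSpace ℝ (Fin n))}
    (hbdd : Bornology.IsBounded Ω) (hmeas : MeasurableSet Ω)
    {h : EuclideanSpace ℝ (Fin n) → ℝ} (hcont : Continuous h) (p : ℝ≥0∞) :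
    eLpNorm h p (volume.restrict Ω) < ⊤ := by
  obtain ⟨C, hC⟩ := (hbdd.isCompact_closure).exists_bound_of_continuousOn hcont.continuousOn
  have hae : ∀ᵐ x ∂(volume.restrict Ω), ‖h x‖ ≤ C :=
    (ae_restrict_iff' hmeas).2 (ae_of_all _ fun x hx => hC x (subset_closure hx))
  calc eLpNorm h p (volume.restrict Ω)
      ≤ (volume.restrict Ω) Set.univ ^ p.toReal⁻¹ * ENNReal.ofReal C :=
        eLpNorm_le_of_ae_bound hae
  _ < ⊤ := by
      apply ENNReal.mul_lt_top _ ENNReal.ofReal_lt_top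
      rw [Measure.restrict_apply_univ]
      exact ENNReal.rpow_lt_top_of_nonneg (by positivity) hbdd.measure_lt_top.ne

theorem key_estimate
    (n : ℕ) (hn : 1 ≤ n) (lam Lam gam mu C : ℝ) (hlam : 0 < lam) (hle : lam ≤ Lam)
    (hgam : 0 ≤ gam) (hmu : 0 ≤ mu) (hC : 0 < C)
    (Ω : Set (EuclideanSpace ℝ (Fin n))) (hopen : IsOpen Ω)
    (hbdd : Bornology.IsBounded Ω)
    (f : EuclideanSpace ℝ (Fin n) → ℝ)
    (g : EuclideanSpace ℝ (Fin n) → ℝ)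
    (F : EuclideanSpace ℝ (Fin n) → ℝ → EuclideanSpace ℝ (Fin n) →
      Matrix (Fin n) (Fin n) ℝ → ℝ)
    (hFstruct : ∀ᵐ x ∂(volume.restrict Ω), ∀ (r s : ℝ) (p q : EuclideanSpace ℝ (Fin n))
      (M N : Matrix (Fin n) (Fin n) ℝ), M.IsSymm → N.IsSymm →
      pucciMinus n lam Lam (M - N) - gam * ‖p - q‖ - mu * max (s - r) 0 ≤
        F x r p M - F x s q N ∧
      F x r p M - F x s q N ≤
        pucciPlus n lam Lam (M - N) + gam * ‖p - q‖ + mu * max (r - s) 0)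
    (u : EuclideanSpace ℝ (Fin n) → ℝ) (hu : ContDiff ℝ 2 u)
    (husol : ∀ᵐ x ∂(volume.restrict Ω), opApply n F u x = f x)
    (hubdry : ∀ x ∈ frontier Ω, u x = g x)
    (vj : EuclideanSpace ℝ (Fin n) → ℝ) (hvj : ContDiff ℝ 2 vj) :
    Psi n Ω C g f F vj ≤
      sSup ((fun x => |u x - vj x|) '' frontier Ω) +
          C * (Real.sqrt n * Lam *
                (eLpNorm (fun x => frobNorm n (hessianMatrix n (u - vj) x)) n
                  (volume.restrict Ω)).toReal +
              gam * (eLpNorm (fun x => ‖gradient (u - vj) x‖) n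
                  (volume.restrict Ω)).toReal +
              mu * (eLpNorm (fun x => u x - vj x) n (volume.restrict Ω)).toReal) := by
  have huv : ContDiff ℝ 2 (u - vj) := hu.sub hvj
  have hLam : 0 ≤ Lam := hlam.le.trans hle
  set a : ℝ := Real.sqrt n * Lam with ha
  have ha0 : 0 ≤ a := by positivity
  -- boundary terms agree
  have hbnd : ((fun x => |g x - vj x|) '' frontier Ω) = ((fun x => |u x - vj x|) '' frontier Ω) :=
    Set.image_congr fun x hx => by rw [hubdry x hx]
  -- the three comparison functions
  set g1 : EuclideanSpace ℝ (Fin n) → ℝ := fun x => frobNorm n (hessianMatrix n (u - vj) x)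
    with hg1
  set g2 : EuclideanSpace ℝ (Fin n) → ℝ := fun x => ‖gradient (u - vj) x‖ with hg2
  set g3 : EuclideanSpace ℝ (Fin n) → ℝ := fun x => |u x - vj x| with hg3
  have hc1 : Continuous g1 := continuous_hessian_frob huv
  have hc2 : Continuous g2 := continuous_gradient_norm huv
  have hc3 : Continuous g3 := (hu.continuous.sub hvj.continuous).abs
  -- pointwise a.e. bound
  have hptwise : ∀ᵐ x ∂(volume.restrict Ω),
      ‖f x - opApply n F vj x‖ ≤ ‖(a • g1 + (gam • g2 + mu • g3)) x‖ := by
    filter_upwards [hFstruct, husol] with x hFx hux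
    have hM := hessianMatrix_isSymm hu x
    have hN := hessianMatrix_isSymm hvj x
    obtain ⟨hlow, hhigh⟩ := hFx (u x) (vj x) (gradient u x) (gradient vj x)
      (hessianMatrix n u x) (hessianMatrix n vj x) hM hN
    have hMN : hessianMatrix n u x - hessianMatrix n vj x = hessianMatrix n (u - vj) x :=
      (hessianMatrix_sub hu hvj x).symm
    have hpq : gradient u x - gradient vj x = gradient (u - vj) x :=
      (gradient_sub' hu hvj x).symm
    rw [hMN, hpq] at hlow hhigh
    have hplus : pucciPlus n lam Lam (hessianMatrix n (u - vj) x) ≤ a * g1 x :=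
      pucciPlus_le hlam.le hle _
    have hminus : -(a * g1 x) ≤ pucciMinus n lam Lam (hessianMatrix n (u - vj) x) :=
      le_pucciMinus hlam.le hle _
    have hmax1 : max (u x - vj x) 0 ≤ g3 x := max_le (le_abs_self _) (abs_nonneg _)
    have hmax2 : max (vj x - u x) 0 ≤ g3 x := by
      have h' : vj x - u x ≤ |u x - vj x| := by
        rw [← abs_sub_comm]; exact le_abs_self _
      exact max_le h' (abs_nonneg _)
    have hdiff : |F x (u x) (gradient u x) (hessianMatrix n u x) -
        F x (vj x) (gradient vj x) (hessianMatrix n vj x)| ≤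
        a * g1 x + gam * g2 x + mu * g3 x := by
      rw [abs_le]
      constructor
      · have : gam * ‖gradient (u - vj) x‖ = gam * g2 x := rfl
        nlinarith [mul_le_mul_of_nonneg_left hmax2 hmu]
      · nlinarith [mul_le_mul_of_nonneg_left hmax1 hmu]
    have hfu : f x - opApply n F vj x = F x (u x) (gradient u x) (hessianMatrix n u x) -
        F x (vj x) (gradient vj x) (hessianMatrix n vj x) := by
      rw [← hux]; rfl
    rw [Real.norm_eq_abs, hfu]
    have : ‖(a • g1 + (gam • g2 + mu • g3)) x‖ = |a * g1 x + (gam * g2 x + mu * g3 x)| := by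
      simp [Pi.add_apply, Pi.smul_apply, smul_eq_mul, Real.norm_eq_abs]
    rw [this]
    refine hdiff.trans ?_
    have := le_abs_self (a * g1 x + (gam * g2 x + mu * g3 x))
    linarith
  -- eLpNorm estimates
  have hp1 : (1 : ℝ≥0∞) ≤ (n : ℝ≥0∞) := by exact_mod_cast hn
  have hmeas : MeasurableSet Ω := hopen.measurableSet
  set μr := volume.restrict Ω
  have hE : eLpNorm (fun x => f x - opApply n F vj x) n μr ≤
      eLpNorm (a • g1 + (gam • g2 + mu • g3)) n μr := eLpNorm_mono_ae hptwise
  have hsum : eLpNorm (a • g1 + (gam • g2 + mu • g3)) n μr ≤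
      (‖a‖₊ : ℝ≥0∞) * eLpNorm g1 n μr +
        ((‖gam‖₊ : ℝ≥0∞) * eLpNorm g2 n μr + (‖mu‖₊ : ℝ≥0∞) * eLpNorm g3 n μr) := by
    calc eLpNorm (a • g1 + (gam • g2 + mu • g3)) n μr
        ≤ eLpNorm (a • g1) n μr + eLpNorm (gam • g2 + mu • g3) n μr :=
          eLpNorm_add_le ((hc1.aestronglyMeasurable).const_smul a)
            (((hc2.aestronglyMeasurable).const_smul gam).add
              ((hc3.aestronglyMeasurable).const_smul mu)) hp1
      _ ≤ eLpNorm (a • g1) n μr + (eLpNorm (gam • g2) n μr + eLpNorm (mu • g3) n μr) := by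
          gcongr
          exact eLpNorm_add_le ((hc2.aestronglyMeasurable).const_smul gam)
            ((hc3.aestronglyMeasurable).const_smul mu) hp1
      _ = _ := by rw [eLpNorm_const_smul, eLpNorm_const_smul, eLpNorm_const_smul, enorm_eq_nnnorm, enorm_eq_nnnorm,
          enorm_eq_nnnorm]
  have hfin1 : eLpNorm g1 n μr < ⊤ := eLpNorm_lt_top_of_cont hbdd hmeas hc1 n
  have hfin2 : eLpNorm g2 n μr < ⊤ := eLpNorm_lt_top_of_cont hbdd hmeas hc2 n
  have hfin3 : eLpNorm g3 n μr < ⊤ := eLpNorm_lt_top_of_cont hbdd hmeas hc3 n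
  have hRHSne : (‖a‖₊ : ℝ≥0∞) * eLpNorm g1 n μr +
      ((‖gam‖₊ : ℝ≥0∞) * eLpNorm g2 n μr + (‖mu‖₊ : ℝ≥0∞) * eLpNorm g3 n μr) ≠ ⊤ := by
    refine ENNReal.add_ne_top.2 ⟨?_, ENNReal.add_ne_top.2 ⟨?_, ?_⟩⟩ <;>
      exact (ENNReal.mul_lt_top ENNReal.coe_lt_top (by assumption)).ne
  have htoReal : (eLpNorm (fun x => f x - opApply n F vj x) n μr).toReal ≤
      a * (eLpNorm g1 n μr).toReal + gam * (eLpNorm g2 n μr).toReal +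
        mu * (eLpNorm g3 n μr).toReal := by
    have := ENNReal.toReal_mono hRHSne (hE.trans hsum)
    rw [ENNReal.toReal_add (by
        exact (ENNReal.mul_lt_top ENNReal.coe_lt_top hfin1).ne) (by
        exact (ENNReal.add_ne_top.2 ⟨(ENNReal.mul_lt_top ENNReal.coe_lt_top hfin2).ne,
          (ENNReal.mul_lt_top ENNReal.coe_lt_top hfin3).ne⟩)),
      ENNReal.toReal_add (by
        exact (ENNReal.mul_lt_top ENNReal.coe_lt_top hfin2).ne) (by
        exact (ENNReal.mul_lt_top ENNReal.coe_lt_top hfin3).ne),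
      ENNReal.toReal_mul, ENNReal.toReal_mul, ENNReal.toReal_mul] at this
    simp only [ENNReal.coe_toReal, coe_nnnorm, Real.norm_eq_abs, abs_of_nonneg ha0,
      abs_of_nonneg hgam, abs_of_nonneg hmu] at this
    linarith
  have hg3norm : eLpNorm g3 n μr = eLpNorm (fun x => u x - vj x) n μr := by
    rw [hg3]
    simpa [Real.norm_eq_abs] using eLpNorm_norm (μ := μr) (p := (n : ℝ≥0∞)) (fun x => u x - vj x)
  rw [Psi, hbnd]
  gcongr
  rw [← hg3norm]
  exact htoReal


/-- A priori error estimate for the conforming method (classical regularity):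
`sup_Ω |u − u_j| ≤ inf_{v_j ∈ V_j} [sup_{∂Ω}|u − v_j| +
  C(√n·Λ‖D²(u−v_j)‖_{Lⁿ} + γ‖∇(u−v_j)‖_{Lⁿ} + μ‖u−v_j‖_{Lⁿ})]`. -/
theorem a_priori_error_estimate
    (n : ℕ) (hn : 1 ≤ n) (lam Lam gam mu C : ℝ) (hlam : 0 < lam) (hle : lam ≤ Lam)
    (hgam : 0 ≤ gam) (hmu : 0 ≤ mu) (hC : 0 < C)
    (Ω : Set (EuclideanSpace ℝ (Fin n))) (hopen : IsOpen Ω)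
    (hbdd : Bornology.IsBounded Ω) (hne : Ω.Nonempty)
    (f : EuclideanSpace ℝ (Fin n) → ℝ) (hf : MemLp f n (volume.restrict Ω))
    (g : EuclideanSpace ℝ (Fin n) → ℝ) (B : ℝ) (hg : ∀ x ∈ frontier Ω, |g x| ≤ B)
    (F : EuclideanSpace ℝ (Fin n) → ℝ → EuclideanSpace ℝ (Fin n) →
      Matrix (Fin n) (Fin n) ℝ → ℝ)
    (hFstruct : ∀ᵐ x ∂(volume.restrict Ω), ∀ (r s : ℝ) (p q : EuclideanSpace ℝ (Fin n))
      (M N : Matrix (Fin n) (Fin n) ℝ), M.IsSymm → N.IsSymm →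
      pucciMinus n lam Lam (M - N) - gam * ‖p - q‖ - mu * max (s - r) 0 ≤
        F x r p M - F x s q N ∧
      F x r p M - F x s q N ≤
        pucciPlus n lam Lam (M - N) + gam * ‖p - q‖ + mu * max (r - s) 0)
    (u : EuclideanSpace ℝ (Fin n) → ℝ) (hu : ContDiff ℝ 2 u)
    (husol : ∀ᵐ x ∂(volume.restrict Ω), opApply n F u x = f x)
    (hubdry : ∀ x ∈ frontier Ω, u x = g x)
    (hstab : ∀ v : EuclideanSpace ℝ (Fin n) → ℝ, ContDiff ℝ 2 v →
      sSup ((fun x => |u x - v x|) '' Ω) ≤ Psi n Ω C g f F v)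
    (Vj : Set (EuclideanSpace ℝ (Fin n) → ℝ)) (hVj : ∀ v ∈ Vj, ContDiff ℝ 2 v)
    (uj : EuclideanSpace ℝ (Fin n) → ℝ) (hujmem : uj ∈ Vj)
    (hujmin : ∀ v ∈ Vj, Psi n Ω C g f F uj ≤ Psi n Ω C g f F v) :
    sSup ((fun x => |u x - uj x|) '' Ω) ≤
      sInf ((fun vj =>
        sSup ((fun x => |u x - vj x|) '' frontier Ω) +
          C * (Real.sqrt n * Lam *
                (eLpNorm (fun x => frobNorm n (hessianMatrix n (u - vj) x)) n
                  (volume.restrict Ω)).toReal +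
              gam * (eLpNorm (fun x => ‖gradient (u - vj) x‖) n
                  (volume.restrict Ω)).toReal +
              mu * (eLpNorm (fun x => u x - vj x) n (volume.restrict Ω)).toReal)) '' Vj) := by
  refine le_csInf ⟨_, Set.mem_image_of_mem _ hujmem⟩ ?_
  rintro b ⟨vj, hvjmem, rfl⟩
  calc sSup ((fun x => |u x - uj x|) '' Ω)
      ≤ Psi n Ω C g f F uj := hstab uj (hVj uj hujmem)
    _ ≤ Psi n Ω C g f F vj := hujmin vj hvjmem
    _ ≤ _ := key_estimate n hn lam Lam gam mu C hlam hle hgam hmu hC Ω hopen hbdd f g F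
        hFstruct u hu husol hubdry vj (hVj vj hvjmem)
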